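/- arXiv:2310.12137 — 5 statements merged into one kernel-verified Lean document; each statement's English description precedes it below -/
import Mathlib

section
/- Let 3 ≤ m ≤ n and n ≡ -1 (mod m). Then every bipartite graph of girth at least 6 in which one bipartition class S has all degrees n and the other class L has all degrees m satisfies |S| + |L| ≥ (n/m + 1)(n+1)(m-1). -/
/-!
Counting edges between the two classes gives `|S| n = |L| m`, and since `n ≡ -1 (mod m)` this
forces `m ∣ |S|`. Girth at least 6 means two vertices have at most one common neighbour, so the
vertices at distance two from a fixed `u ∈ S` are `n (m - 1)` distinct elements of `S \ {u}`.
The least multiple of `m` exceeding `n (m - 1)` is `(n + 1)(m - 1)`, which bounds `|S|`, and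
`|S| + |L| = |S| (n + m) / m`.
-/

open Finset

namespace SimpleGraph

variable {V : Type*} {G : SimpleGraph V}

theorem le_egirth_of_le_girth {k : ℕ} (hk : k ≠ 0) (h : k ≤ G.girth) :
    (k : ℕ∞) ≤ G.egirth := by
  have hfin : G.egirth ≠ ⊤ := fun htop => hk (by simpa [girth, htop] using h)
  rw [← ENat.natCast_toNat hfin]
  exact_mod_cast h

theorem exists_adj_of_not_isAcyclic (h : ¬ G.IsAcyclic) : ∃ u v, G.Adj u v :=
  ne_bot_iff_exists_adj.mp fun hbot => h (hbot ▸ isAcyclic_bot)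

theorem commonNeighbors_subsingleton_of_four_lt_egirth (hG : 4 < G.egirth) {u v : V}
    (huv : u ≠ v) : (G.commonNeighbors u v).Subsingleton := by
  intro l hl l' hl'
  obtain ⟨hul, hvl⟩ := (G.mem_commonNeighbors).1 hl
  obtain ⟨hul', hvl'⟩ := (G.mem_commonNeighbors).1 hl'
  by_contra hll
  let w : G.Walk u u := .cons hul (.cons hvl.symm (.cons hvl' (.cons hul'.symm .nil)))
  have hw : w.IsCycle := by
    have := hul.ne; have := hvl.ne; have := hvl'.ne; have := hul'.ne
    simp only [w, Walk.cons_isCycle_iff, Walk.cons_isPath_iff, Walk.IsPath.nil, Walk.support_cons,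
      Walk.support_nil, Walk.edges_cons, Walk.edges_nil, List.mem_cons, List.not_mem_nil,
      Sym2.eq_iff]
    tauto
  have := hG.trans_le (egirth_le_length hw)
  simp [w] at this

theorem card_biUnion_neighborFinset_erase [DecidableEq V] [G.LocallyFinite]
    (hG : 4 < G.egirth) (u : V) :
    #((G.neighborFinset u).biUnion fun l => (G.neighborFinset l).erase u) =
      ∑ l ∈ G.neighborFinset u, (G.degree l - 1) := by
  rw [card_biUnion]
  · refine sum_congr rfl fun l hl => ?_
    rw [mem_neighborFinset] at hl
    rw [card_erase_of_mem ((G.mem_neighborFinset l u).2 hl.symm), card_neighborFinset_eq_degree]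
  · intro l hl l' hl' hll
    refine Finset.disjoint_left.2 fun v hv hv' => hll ?_
    simp only [mem_coe, mem_neighborFinset, mem_erase] at hl hl' hv hv'
    exact commonNeighbors_subsingleton_of_four_lt_egirth hG (Ne.symm hv.1)
      ⟨hl, hv.2.symm⟩ ⟨hl', hv'.2.symm⟩

variable {S L : Finset V}

theorem IsBipartiteWith.sum_degree_sub_one_lt_card [DecidableEq V] [G.LocallyFinite]
    (hB : G.IsBipartiteWith S L) (hG : 4 < G.egirth) {u : V} (hu : u ∈ S) :
    ∑ l ∈ G.neighborFinset u, (G.degree l - 1) < #S := by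
  rw [← card_biUnion_neighborFinset_erase hG u]
  refine lt_of_le_of_lt (card_le_card fun v hv => ?_) (card_erase_lt_of_mem hu)
  simp only [mem_biUnion, mem_neighborFinset, mem_erase] at hv
  obtain ⟨l, hul, hvu, hlv⟩ := hv
  exact mem_erase.2 ⟨hvu, hB.mem_of_mem_adj' (hB.mem_of_mem_adj hu hul) hlv.symm⟩

theorem IsBipartiteWith.card_mul_eq_card_mul [G.LocallyFinite] (hB : G.IsBipartiteWith S L)
    {n m : ℕ} (hS : ∀ v ∈ S, G.degree v = n) (hL : ∀ v ∈ L, G.degree v = m) :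
    #S * n = #L * m := by
  have := isBipartiteWith_sum_degrees_eq hB
  rwa [sum_congr rfl hS, sum_congr rfl hL, sum_const, sum_const, smul_eq_mul, smul_eq_mul] at this

end SimpleGraph

theorem stmt2_general {V : Type*} [Fintype V] (Γ : SimpleGraph V) [DecidableRel Γ.Adj]
    (S L : Finset V) (m n : ℕ) (hmod : m ∣ n + 1)
    (hpart : ∀ v : V, v ∈ S ↔ v ∉ L)
    (hbip : ∀ ⦃u v : V⦄, Γ.Adj u v → (u ∈ S ∧ v ∈ L) ∨ (u ∈ L ∧ v ∈ S))
    (hS : ∀ v ∈ S, Γ.degree v = n)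
    (hL : ∀ v ∈ L, Γ.degree v = m)
    (hgirth : 6 ≤ Γ.girth) :
    (n + m) * (n + 1) * (m - 1) ≤ (S.card + L.card) * m := by
  classical
  have hB : Γ.IsBipartiteWith S L :=
    ⟨disjoint_coe.2 (disjoint_left.2 fun v hvS => (hpart v).1 hvS), hbip⟩
  have hG : 4 < Γ.egirth :=
    lt_of_lt_of_le (by norm_num) (Γ.le_egirth_of_le_girth (by norm_num) hgirth)
  have hcyc : ¬ Γ.IsAcyclic := fun h => by rw [h.girth_eq_zero] at hgirth; omega
  obtain ⟨u, hu⟩ : ∃ u, u ∈ S := by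
    obtain ⟨a, b, hab⟩ := Γ.exists_adj_of_not_isAcyclic hcyc
    rcases hbip hab with ⟨ha, -⟩ | ⟨-, hb⟩
    exacts [⟨a, ha⟩, ⟨b, hb⟩]
  have hcount : #S * n = #L * m := hB.card_mul_eq_card_mul hS hL
  have htree : n * (m - 1) < #S := by
    have := hB.sum_degree_sub_one_lt_card hG hu
    rwa [sum_congr rfl fun l hl => by
        rw [hL l (hB.mem_of_mem_adj hu ((Γ.mem_neighborFinset u l).1 hl))],
      sum_const, Γ.card_neighborFinset_eq_degree, hS u hu, smul_eq_mul] at this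
  have hdvd : m ∣ #S := by
    have : #S * (n + 1) = #L * m + #S := by rw [mul_add, hcount, mul_one]
    exact (Nat.dvd_add_right (dvd_mul_left m #L)).1 (this ▸ dvd_mul_of_dvd_right hmod #S)
  have hS_ge : (n + 1) * (m - 1) ≤ #S :=
    ((Nat.modEq_zero_iff_dvd.2 (dvd_mul_of_dvd_left hmod _)).trans
      (Nat.modEq_zero_iff_dvd.2 hdvd).symm).le_of_lt_add (by rw [add_mul]; omega)
  calc (n + m) * (n + 1) * (m - 1) = (n + 1) * (m - 1) * (n + m) := by ring
    _ ≤ #S * (n + m) := Nat.mul_le_mul_right _ hS_ge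
    _ = (#S + #L) * m := by rw [add_mul, ← hcount]; ring

/-- Let `3 ≤ m ≤ n` and `n ≡ -1 (mod m)`. Every bipartite graph of girth at least 6 in which
one bipartition class `S` has all degrees `n` and the other class `L` has all degrees `m`
satisfies `|S| + |L| ≥ (n/m + 1)(n+1)(m-1)`, i.e. `(|S| + |L|)·m ≥ (n+m)(n+1)(m-1)`. -/
theorem stmt2 {V : Type*} [Fintype V] (Γ : SimpleGraph V) [DecidableRel Γ.Adj]
    (S L : Finset V) (m n : ℕ) (hm : 3 ≤ m) (hmn : m ≤ n) (hmod : m ∣ n + 1)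
    (hpart : ∀ v : V, v ∈ S ↔ v ∉ L)
    (hbip : ∀ ⦃u v : V⦄, Γ.Adj u v → (u ∈ S ∧ v ∈ L) ∨ (u ∈ L ∧ v ∈ S))
    (hS : ∀ v ∈ S, Γ.degree v = n)
    (hL : ∀ v ∈ L, Γ.degree v = m)
    (hgirth : 6 ≤ Γ.girth) :
    (n + m) * (n + 1) * (m - 1) ≤ (S.card + L.card) * m :=
  stmt2_general Γ S L m n hmod hpart hbip hS hL hgirth
end

section
/- Let 3 ≤ m ≤ n with n ≡ -1 (mod m). If a Steiner system S(2, m, 1+(n+1)(m-1)) exists, then deleting one point p and all blocks through p yields an incidence structure with (n+1)(m-1) points and n(n+1)(m-1)/m blocks, in which every point lies on exactly n blocks and every block contains exactly m points, and whose incidence graph is bipartite of girth 6; hence an (m,n;6)-bipartite biregular graph of order (n/m+1)(n+1)(m-1) exists. -/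
/-- The incidence graph of a point-line incidence relation `I`. -/
def incGraph {P L : Type*} (I : P → L → Prop) : SimpleGraph (P ⊕ L) where
  Adj x y :=
    match x, y with
    | Sum.inl p, Sum.inr l => I p l
    | Sum.inr l, Sum.inl p => I p l
    | _, _ => False
  symm := ⟨by rintro (p | l) (p' | l') h <;> exact h⟩
  loopless := ⟨by rintro (p | l) h <;> exact h⟩

/-! Counting the pairs `(b, x)` with `q, x ∈ b` shows that every point lies on
`(N - 1) / (m - 1) = n + 1` blocks, and deleting `p` removes exactly one block through each other
point; double counting then gives the number of blocks. Two points share at most one block, so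
the incidence graph, being bipartite, has no cycle of length `4` or less. A cycle of length `6` is
a triangle: take two points of a block `b₀` missing `p`, and a third point off `b₀` and off the two
blocks joining `p` to them; it exists because these three blocks cover only `3m - 1 < N` points. -/

open Finset SimpleGraph

section IncidenceGraph

variable {P L : Type*} {I : P → L → Prop}

def IsPartialLinearSpace (I : P → L → Prop) : Prop :=
  ∀ ⦃p₁ p₂ : P⦄ ⦃l₁ l₂ : L⦄, p₁ ≠ p₂ → I p₁ l₁ → I p₂ l₁ → I p₁ l₂ → I p₂ l₂ → l₁ = l₂

def HasTriangle (I : P → L → Prop) : Prop :=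
  ∃ (p₁ p₂ p₃ : P) (l₁₂ l₂₃ l₃₁ : L), p₁ ≠ p₂ ∧ ¬I p₃ l₁₂ ∧
    I p₁ l₁₂ ∧ I p₂ l₁₂ ∧ I p₂ l₂₃ ∧ I p₃ l₂₃ ∧ I p₃ l₃₁ ∧ I p₁ l₃₁

@[simp] lemma incGraph_adj_inl_inr {p : P} {l : L} :
    (incGraph I).Adj (.inl p) (.inr l) ↔ I p l := .rfl

@[simp] lemma incGraph_adj_inr_inl {p : P} {l : L} :
    (incGraph I).Adj (.inr l) (.inl p) ↔ I p l := .rfl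

@[simp] lemma not_incGraph_adj_inl_inl {p p' : P} : ¬(incGraph I).Adj (.inl p) (.inl p') := id

@[simp] lemma not_incGraph_adj_inr_inr {l l' : L} : ¬(incGraph I).Adj (.inr l) (.inr l') := id

def incGraphColoring (I : P → L → Prop) : (incGraph I).Coloring Bool :=
  Coloring.mk Sum.isLeft <| by rintro (p | l) (p' | l') h <;> simp_all

lemma even_length_of_incGraph_walk {u : P ⊕ L} (w : (incGraph I).Walk u u) : Even w.length :=
  ((incGraphColoring I).even_length_iff_congr w).mpr .rfl

lemma IsPartialLinearSpace.not_incGraph_square (hI : IsPartialLinearSpace I) {a b c d : P ⊕ L}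
    (hab : (incGraph I).Adj a b) (hbc : (incGraph I).Adj b c) (hcd : (incGraph I).Adj c d)
    (hda : (incGraph I).Adj d a) (hac : a ≠ c) (hbd : b ≠ d) : False := by
  rcases a with p₁ | l₁ <;> rcases b with p₂ | l₂ <;> rcases c with p₃ | l₃ <;>
    rcases d with p₄ | l₄ <;> simp only [incGraph_adj_inl_inr, incGraph_adj_inr_inl,
      not_incGraph_adj_inl_inl, not_incGraph_adj_inr_inr, ne_eq, Sum.inl.injEq,
      Sum.inr.injEq] at hab hbc hcd hda hac hbd
  · exact hbd (hI hac hab hbc hda hcd)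
  · exact hac (hI hbd hab hda hbc hcd)

lemma IsPartialLinearSpace.six_le_egirth_incGraph (hI : IsPartialLinearSpace I) :
    6 ≤ (incGraph I).egirth := by
  refine le_egirth.mpr fun a w hw => ?_
  obtain ⟨k, hk⟩ := even_length_of_incGraph_walk w
  suffices w.length ≠ 4 by have := hw.three_le_length; norm_cast; omega
  intro h4
  have hclose : w.getVert 4 = w.getVert 0 := by rw [← h4, Walk.getVert_length, Walk.getVert_zero]
  refine hI.not_incGraph_square (w.adj_getVert_succ (i := 0) (by omega))
    (w.adj_getVert_succ (i := 1) (by omega)) (w.adj_getVert_succ (i := 2) (by omega))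
    (hclose ▸ w.adj_getVert_succ (i := 3) (by omega))
    (hw.getVert_sub_one_ne_getVert_add_one (i := 1) (by omega))
    (hw.getVert_sub_one_ne_getVert_add_one (i := 2) (by omega))

lemma egirth_incGraph_le_six {p₁ p₂ p₃ : P} {l₁₂ l₂₃ l₃₁ : L}
    (hp₁₂ : p₁ ≠ p₂) (hp₂₃ : p₂ ≠ p₃) (hp₃₁ : p₃ ≠ p₁)
    (hl₁₂ : l₁₂ ≠ l₂₃) (hl₂₃ : l₂₃ ≠ l₃₁) (hl₃₁ : l₃₁ ≠ l₁₂)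
    (h₁ : I p₁ l₁₂) (h₂ : I p₂ l₁₂) (h₃ : I p₂ l₂₃) (h₄ : I p₃ l₂₃) (h₅ : I p₃ l₃₁)
    (h₆ : I p₁ l₃₁) : (incGraph I).egirth ≤ 6 := by
  let w : (incGraph I).Walk (.inl p₁) (.inl p₁) :=
    .cons (incGraph_adj_inl_inr.2 h₁) <| .cons (incGraph_adj_inr_inl.2 h₂) <|
    .cons (incGraph_adj_inl_inr.2 h₃) <| .cons (incGraph_adj_inr_inl.2 h₄) <|
    .cons (incGraph_adj_inl_inr.2 h₅) <| .cons (incGraph_adj_inr_inl.2 h₆) .nil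
  have hw : w.IsCycle := by
    simp [w, Walk.cons_isCycle_iff, Walk.isPath_def, hp₁₂, hp₂₃, hp₃₁, hl₁₂, hl₂₃,
      hp₁₂.symm, hp₃₁.symm, hl₃₁.symm]
  simpa [w] using egirth_le_length hw

lemma IsPartialLinearSpace.girth_incGraph_eq_six (hI : IsPartialLinearSpace I)
    (hT : HasTriangle I) : (incGraph I).girth = 6 := by
  obtain ⟨p₁, p₂, p₃, l₁₂, l₂₃, l₃₁, hp₁₂, hp₃, h₁, h₂, h₃, h₄, h₅, h₆⟩ := hT
  have hl₂₃ : l₂₃ ≠ l₃₁ := by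
    rintro rfl
    exact hp₃ (hI hp₁₂ h₆ h₃ h₁ h₂ ▸ h₄)
  have hle := egirth_incGraph_le_six hp₁₂ (by rintro rfl; exact hp₃ h₂)
    (by rintro rfl; exact hp₃ h₁) (by rintro rfl; exact hp₃ h₄) hl₂₃
    (by rintro rfl; exact hp₃ h₅) h₁ h₂ h₃ h₄ h₅ h₆
  rw [girth, le_antisymm hle hI.six_le_egirth_incGraph]
  rfl

end IncidenceGraph

section SteinerSystem

variable {α : Type*}

structure IsSteinerSystem (B : Finset (Finset α)) (m : ℕ) : Prop where
  card_eq : ∀ b ∈ B, #b = m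
  existsUnique : ∀ q q' : α, q ≠ q' → ∃! b, b ∈ B ∧ q ∈ b ∧ q' ∈ b

def residualIncidence (B : Finset (Finset α)) (p : α) :
    {q : α // q ≠ p} → {b : Finset α // b ∈ B ∧ p ∉ b} → Prop :=
  fun q b => (q : α) ∈ (b : Finset α)

namespace IsSteinerSystem

variable {B : Finset (Finset α)} {m : ℕ}

lemma eq_of_mem_of_mem (hB : IsSteinerSystem B m) {q q' : α} (hqq' : q ≠ q')
    {b b' : Finset α} (hb : b ∈ B) (hqb : q ∈ b) (hq'b : q' ∈ b)
    (hb' : b' ∈ B) (hqb' : q ∈ b') (hq'b' : q' ∈ b') : b = b' :=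
  (hB.existsUnique q q' hqq').unique ⟨hb, hqb, hq'b⟩ ⟨hb', hqb', hq'b'⟩

lemma isPartialLinearSpace_residualIncidence (hB : IsSteinerSystem B m) (p : α) :
    IsPartialLinearSpace (residualIncidence B p) :=
  fun _ _ l₁ l₂ hq h₁ h₂ h₃ h₄ =>
    Subtype.ext <| hB.eq_of_mem_of_mem (Subtype.coe_ne_coe.2 hq) l₁.2.1 h₁ h₂ l₂.2.1 h₃ h₄

variable [DecidableEq α]

lemma card_filter_mem_and_mem (hB : IsSteinerSystem B m) {q q' : α} (hqq' : q ≠ q') :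
    #{b ∈ B | q ∈ b ∧ q' ∈ b} = 1 :=
  card_eq_one_iff_existsUnique.2 <| by simpa only [mem_filter] using hB.existsUnique q q' hqq'

lemma card_filter_mem_mul [Fintype α] (hB : IsSteinerSystem B m) (q : α) :
    #{b ∈ B | q ∈ b} * (m - 1) = Fintype.card α - 1 := by
  have := card_mul_eq_card_mul (s := {b ∈ B | q ∈ b}) (t := univ.erase q) (fun b x => x ∈ b)
    (m := m - 1) (n := 1) ?_ ?_
  · rwa [mul_one, card_erase_of_mem (mem_univ q), card_univ] at this
  · intro b hb
    rw [mem_filter] at hb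
    rw [bipartiteAbove, filter_mem_eq_inter, erase_inter, univ_inter, card_erase_of_mem hb.2,
      hB.card_eq b hb.1]
  · intro x hx
    rw [bipartiteBelow, filter_filter]
    exact hB.card_filter_mem_and_mem (mem_erase.1 hx).1.symm

lemma card_filter_notMem_and_mem_add_one (hB : IsSteinerSystem B m) {p q : α} (hpq : p ≠ q) :
    #{b ∈ B | p ∉ b ∧ q ∈ b} + 1 = #{b ∈ B | q ∈ b} := by
  rw [← card_filter_add_card_filter_not (s := {b ∈ B | q ∈ b}) (fun b => p ∉ b), filter_filter,
    filter_filter, ← hB.card_filter_mem_and_mem hpq]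
  simp only [not_not, and_comm]

lemma card_filter_notMem_mul [Fintype α] (hB : IsSteinerSystem B m) (p : α) {r : ℕ}
    (hr : ∀ q, q ≠ p → #{b ∈ B | p ∉ b ∧ q ∈ b} = r) :
    #{b ∈ B | p ∉ b} * m = (Fintype.card α - 1) * r := by
  have := card_mul_eq_card_mul (s := {b ∈ B | p ∉ b}) (t := univ.erase p) (fun b x => x ∈ b)
    (m := m) (n := r) ?_ ?_
  · rwa [card_erase_of_mem (mem_univ p), card_univ] at this
  · intro b hb
    rw [mem_filter] at hb
    rw [bipartiteAbove, filter_mem_eq_inter, erase_inter, univ_inter, erase_eq_of_notMem hb.2,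
      hB.card_eq b hb.1]
  · intro x hx
    rw [bipartiteBelow, filter_filter]
    exact hr x (mem_erase.1 hx).1

lemma hasTriangle_residualIncidence [Fintype α] (hB : IsSteinerSystem B m) (hm : 2 ≤ m)
    (hα : 3 * m ≤ Fintype.card α) {p : α} {b₀ : Finset α} (hb₀ : b₀ ∈ B) (hpb₀ : p ∉ b₀) :
    HasTriangle (residualIncidence B p) := by
  obtain ⟨q₁, hq₁, q₂, hq₂, hq₁₂⟩ := one_lt_card.1 (by rw [hB.card_eq b₀ hb₀]; omega : 1 < #b₀)
  have hq₁p : q₁ ≠ p := hq₁.ne_of_notMem hpb₀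
  have hq₂p : q₂ ≠ p := hq₂.ne_of_notMem hpb₀
  obtain ⟨l₁, ⟨hl₁, hpl₁, hq₁l₁⟩, -⟩ := hB.existsUnique p q₁ hq₁p.symm
  obtain ⟨l₂, ⟨hl₂, hpl₂, hq₂l₂⟩, -⟩ := hB.existsUnique p q₂ hq₂p.symm
  have hcover : #(b₀ ∪ (l₁ ∪ l₂)) < #(univ : Finset α) := by
    have hl₁₂ := card_union_add_card_inter l₁ l₂
    have hp : 0 < #(l₁ ∩ l₂) := card_pos.2 ⟨p, mem_inter.2 ⟨hpl₁, hpl₂⟩⟩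
    have hb₀l := card_union_le b₀ (l₁ ∪ l₂)
    rw [hB.card_eq _ hl₁, hB.card_eq _ hl₂] at hl₁₂
    rw [hB.card_eq _ hb₀] at hb₀l
    rw [card_univ]
    omega
  obtain ⟨q₃, -, hq₃⟩ := exists_mem_notMem_of_card_lt_card hcover
  simp only [mem_union, not_or] at hq₃
  obtain ⟨hq₃b₀, hq₃l₁, hq₃l₂⟩ := hq₃
  have hq₃p : q₃ ≠ p := (hpl₁.ne_of_notMem hq₃l₁).symm
  obtain ⟨b₂₃, ⟨hb₂₃, hq₂b₂₃, hq₃b₂₃⟩, -⟩ := hB.existsUnique q₂ q₃ (hq₂.ne_of_notMem hq₃b₀)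
  obtain ⟨b₃₁, ⟨hb₃₁, hq₃b₃₁, hq₁b₃₁⟩, -⟩ := hB.existsUnique q₃ q₁ (hq₁.ne_of_notMem hq₃b₀).symm
  have hpb₂₃ : p ∉ b₂₃ := fun hp =>
    hq₃l₂ (hB.eq_of_mem_of_mem hq₂p.symm hb₂₃ hp hq₂b₂₃ hl₂ hpl₂ hq₂l₂ ▸ hq₃b₂₃)
  have hpb₃₁ : p ∉ b₃₁ := fun hp =>
    hq₃l₁ (hB.eq_of_mem_of_mem hq₁p.symm hb₃₁ hp hq₁b₃₁ hl₁ hpl₁ hq₁l₁ ▸ hq₃b₃₁)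
  exact ⟨⟨q₁, hq₁p⟩, ⟨q₂, hq₂p⟩, ⟨q₃, hq₃p⟩, ⟨b₀, hb₀, hpb₀⟩, ⟨b₂₃, hb₂₃, hpb₂₃⟩,
    ⟨b₃₁, hb₃₁, hpb₃₁⟩, Subtype.coe_ne_coe.1 hq₁₂, hq₃b₀, hq₁, hq₂, hq₂b₂₃, hq₃b₂₃, hq₃b₃₁,
    hq₁b₃₁⟩

end IsSteinerSystem

end SteinerSystem

theorem stmt5_general {α : Type*} [Fintype α] [DecidableEq α] (m n : ℕ) (hm : 3 ≤ m) (hmn : m ≤ n)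
    (B : Finset (Finset α))
    (hcard : Fintype.card α = 1 + (n + 1) * (m - 1))
    (hblock : ∀ b ∈ B, b.card = m)
    (hpair : ∀ q q' : α, q ≠ q' → ∃! b, b ∈ B ∧ q ∈ b ∧ q' ∈ b)
    (p : α) :
    Nat.card {q : α // q ≠ p} = (n + 1) * (m - 1) ∧
    Nat.card {b : Finset α // b ∈ B ∧ p ∉ b} * m = n * (n + 1) * (m - 1) ∧
    (∀ q : α, q ≠ p → (B.filter (fun b => p ∉ b ∧ q ∈ b)).card = n) ∧
    (∀ b ∈ B, p ∉ b → b.card = m) ∧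
    (incGraph (fun (q : {q : α // q ≠ p}) (b : {b : Finset α // b ∈ B ∧ p ∉ b}) =>
        (q : α) ∈ (b : Finset α))).girth = 6 ∧
    Nat.card ({q : α // q ≠ p} ⊕ {b : Finset α // b ∈ B ∧ p ∉ b}) * m =
      (n + m) * (n + 1) * (m - 1) := by
  have hB : IsSteinerSystem B m := ⟨hblock, hpair⟩
  have hreplication (q : α) : #{b ∈ B | q ∈ b} = n + 1 :=
    Nat.eq_of_mul_eq_mul_right (show 0 < m - 1 by omega) <| by
      rw [hB.card_filter_mem_mul, hcard]
      omega
  have hresidual (q : α) (hq : q ≠ p) : #{b ∈ B | p ∉ b ∧ q ∈ b} = n := by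
    have := hB.card_filter_notMem_and_mem_add_one hq.symm
    rw [hreplication] at this
    omega
  have hpoints : Nat.card {q : α // q ≠ p} = (n + 1) * (m - 1) := by simp [hcard]
  have hblocks : #{b ∈ B | p ∉ b} * m = n * (n + 1) * (m - 1) := by
    rw [hB.card_filter_notMem_mul p hresidual, hcard, Nat.add_sub_cancel_left]
    ring
  have hnblocks : Nat.card {b : Finset α // b ∈ B ∧ p ∉ b} = #{b ∈ B | p ∉ b} := by
    rw [Nat.card_eq_fintype_card, Fintype.card_of_subtype _ fun b => mem_filter]
  obtain ⟨b₀, hb₀⟩ : ({b ∈ B | p ∉ b} : Finset (Finset α)).Nonempty := by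
    have : 0 < n * (n + 1) * (m - 1) := Nat.mul_pos (Nat.mul_pos (by omega) (by omega)) (by omega)
    exact card_pos.1 (Nat.pos_of_mul_pos_right (hblocks ▸ this))
  have h3m : 3 * m ≤ Fintype.card α := by
    have := Nat.mul_le_mul_right (m - 1) (show 4 ≤ n + 1 by omega)
    omega
  have hgirth := (hB.isPartialLinearSpace_residualIncidence p).girth_incGraph_eq_six
    (hB.hasTriangle_residualIncidence (by omega) h3m (mem_filter.1 hb₀).1 (mem_filter.1 hb₀).2)
  refine ⟨hpoints, hnblocks ▸ hblocks, hresidual, fun b hb _ => hblock b hb, hgirth, ?_⟩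
  rw [Nat.card_sum, add_mul, hnblocks, hblocks, hpoints]
  ring

/-- Let `3 ≤ m ≤ n` with `n ≡ -1 (mod m)`. If a Steiner system `S(2, m, 1+(n+1)(m-1))`
exists, then deleting a point `p` and all blocks through `p` yields a structure with
`(n+1)(m-1)` points and `n(n+1)(m-1)/m` blocks, in which every point lies on exactly `n`
blocks and every block has `m` points, whose incidence graph is bipartite of girth 6;
hence an `(m,n;6)`-bipartite biregular graph of order `(n/m+1)(n+1)(m-1)` exists
(counts involving `/m` are stated multiplied through by `m`). -/
theorem stmt5 {α : Type*} [Fintype α] [DecidableEq α] (m n : ℕ) (hm : 3 ≤ m) (hmn : m ≤ n)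
    (hmod : m ∣ n + 1) (B : Finset (Finset α))
    (hcard : Fintype.card α = 1 + (n + 1) * (m - 1))
    (hblock : ∀ b ∈ B, b.card = m)
    (hpair : ∀ q q' : α, q ≠ q' → ∃! b, b ∈ B ∧ q ∈ b ∧ q' ∈ b)
    (p : α) :
    Nat.card {q : α // q ≠ p} = (n + 1) * (m - 1) ∧
    Nat.card {b : Finset α // b ∈ B ∧ p ∉ b} * m = n * (n + 1) * (m - 1) ∧
    (∀ q : α, q ≠ p → (B.filter (fun b => p ∉ b ∧ q ∈ b)).card = n) ∧
    (∀ b ∈ B, p ∉ b → b.card = m) ∧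
    (incGraph (fun (q : {q : α // q ≠ p}) (b : {b : Finset α // b ∈ B ∧ p ∉ b}) =>
        (q : α) ∈ (b : Finset α))).girth = 6 ∧
    Nat.card ({q : α // q ≠ p} ⊕ {b : Finset α // b ∈ B ∧ p ∉ b}) * m =
      (n + m) * (n + 1) * (m - 1) :=
  stmt5_general m n hm hmn B hcard hblock hpair p
end

section
/- Let 2 < m < n, let r ≥ 3 be odd, and let x be the smallest nonnegative integer for which m divides (1 + n(m-1) + n(m-1)(n-1) + ⋯ + n(m-1)^{(r-1)/2}(n-1)^{(r-3)/2} + x)·n. Then every bipartite biregular graph with degrees m and n and girth 2r has at least (1 + n(m-1) + ⋯ + n(m-1)^{(r-1)/2}(n-1)^{(r-3)/2} + x)·(1 + n/m) vertices. -/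
/-!
Fix a vertex `v` in the class `S` of degree `n`. As long as twice the distance stays below the
girth, a vertex at distance `j + 1` from `v` has exactly one neighbour at distance `j` (two would
close a short cycle), and by bipartiteness all its other neighbours are at distance `j + 2`. So the
spheres around `v` grow by the factors `n, m - 1, n - 1, m - 1, …`, and the even spheres, which lie
in `S`, give `T ≤ |S|` for `T = 1 + n(m-1) + n(m-1)(n-1) + ⋯`. Counting edges gives
`|S| n = |L| m`, so `m ∣ |S| n`, and the minimality of `x` improves the bound to
`T + x ≤ |S|`; finally `(|S| + |L|) m = |S| (m + n)`.
-/

open Finset SimpleGraph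

namespace SimpleGraph

variable {V : Type*} {Γ : SimpleGraph V} {u u₁ u₂ v w z : V} {j : ℕ}

theorem IsBipartiteWith.mem_iff_mem_iff_even_dist {s : Set V} (h : Γ.IsBipartiteWith s sᶜ)
    (hw : Γ.Reachable v w) : (v ∈ s ↔ w ∈ s) ↔ Even (Γ.dist v w) := by
  classical
  let c : Γ.Coloring Bool := Coloring.mk (fun u ↦ decide (u ∈ s)) fun hadj ↦ by
    rcases h.mem_of_adj hadj with ⟨hu, hw⟩ | ⟨hu, hw⟩ <;> simp_all
  obtain ⟨p, hp⟩ := hw.exists_walk_length_eq_dist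
  rw [← hp, c.even_length_iff_congr p]
  change _ ↔ (decide (v ∈ s) = true ↔ decide (w ∈ s) = true)
  simp

theorem IsBipartiteWith.dist_eq_add_one_or_add_one_eq {s : Set V} (h : Γ.IsBipartiteWith s sᶜ)
    (hu : Γ.Reachable v u) (hadj : Γ.Adj u z) :
    Γ.dist v z = Γ.dist v u + 1 ∨ Γ.dist v u = Γ.dist v z + 1 := by
  have hsu := h.mem_iff_mem_iff_even_dist hu
  have hsz := h.mem_iff_mem_iff_even_dist (hu.trans hadj.reachable)
  have hne : Γ.dist v z ≠ Γ.dist v u := fun heq ↦ by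
    rw [heq, ← hsu] at hsz
    rcases h.mem_of_adj hadj with ⟨hu, hz⟩ | ⟨hu, hz⟩ <;> rw [Set.mem_compl_iff] at * <;> tauto
  rcases hadj.diff_dist_adj (u := v) with h' | h' | h' <;> omega

theorem exists_adj_dist_eq (h : Γ.dist v u = j + 1) : ∃ u₀, Γ.Adj u₀ u ∧ Γ.dist v u₀ = j := by
  obtain ⟨p, hp⟩ := exists_walk_of_dist_ne_zero (by omega : Γ.dist v u ≠ 0)
  have hnil : ¬p.Nil := by rw [← Walk.length_eq_zero_iff]; omega
  refine ⟨p.penultimate, p.adj_penultimate hnil, le_antisymm ?_ ?_⟩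
  · simpa [Walk.length_dropLast, hp, h] using Γ.dist_le p.dropLast
  · have := (p.adj_penultimate hnil).reachable.dist_triangle_right v
    rw [dist_eq_one_iff_adj.mpr (p.adj_penultimate hnil)] at this
    omega

theorem dist_le_of_mem_support (p : Γ.Walk v u) (hz : z ∈ p.support) : Γ.dist v z ≤ p.length := by
  classical
  exact (Γ.dist_le (p.takeUntil z hz)).trans (p.length_takeUntil_le_length hz)

theorem Walk.IsPath.isCycle_cons_cons {p : Γ.Walk u₁ u₂} (hp : p.IsPath) (hw : w ∉ p.support)
    (hne : u₁ ≠ u₂) (h₁ : Γ.Adj w u₁) (h₂ : Γ.Adj u₂ w) :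
    (Walk.cons h₂ (Walk.cons h₁ p)).IsCycle := by
  rw [Walk.cons_isCycle_iff]
  refine ⟨hp.cons hw, ?_⟩
  rw [Walk.edges_cons, List.mem_cons, Sym2.eq_iff]
  rintro ((⟨-, rfl⟩ | ⟨rfl, -⟩) | he)
  · exact hw p.start_mem_support
  · exact hne rfl
  · exact hw (p.snd_mem_support_of_mem_edges he)

theorem eq_of_adj_of_dist_eq (hg : ((2 * (j + 1) : ℕ) : ℕ∞) < Γ.egirth)
    (hw : Γ.dist v w = j + 1) (hd₁ : Γ.dist v u₁ = j) (hd₂ : Γ.dist v u₂ = j)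
    (h₁ : Γ.Adj u₁ w) (h₂ : Γ.Adj u₂ w) : u₁ = u₂ := by
  classical
  by_contra hne
  have hvw : Γ.Reachable v w := Reachable.of_dist_ne_zero (by omega)
  obtain ⟨q₁, hq₁⟩ := (hvw.trans h₁.symm.reachable).exists_walk_length_eq_dist
  obtain ⟨q₂, hq₂⟩ := (hvw.trans h₂.symm.reachable).exists_walk_length_eq_dist
  -- joining shortest walks to `u₁` and `u₂` gives a path within distance `j` of `v`, so it avoids
  -- `w`, and closing it through `w` gives a cycle of length at most `2 * j + 2`
  obtain ⟨p, hp, hpj, hwp⟩ : ∃ p : Γ.Walk u₁ u₂, p.IsPath ∧ p.length ≤ 2 * j ∧ w ∉ p.support := by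
    refine ⟨(q₁.reverse.append q₂).bypass, Walk.bypass_isPath _, ?_, fun hwp ↦ ?_⟩
    · have := (q₁.reverse.append q₂).length_bypass_le_length
      simp only [Walk.length_append, Walk.length_reverse] at this
      omega
    · have := (q₁.reverse.append q₂).support_bypass_subset_support hwp
      rw [Walk.mem_support_append_iff, Walk.support_reverse, List.mem_reverse] at this
      rcases this with h | h
      · have := dist_le_of_mem_support q₁ h
        omega
      · have := dist_le_of_mem_support q₂ h
        omega
  have := (egirth_le_length (hp.isCycle_cons_cons hwp hne h₁.symm h₂)).trans_lt' hg
  simp only [Walk.length_cons, Nat.cast_lt] at this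
  omega

theorem IsBipartiteWith.mem_iff_even_of_dist_eq {s : Set V} (h : Γ.IsBipartiteWith s sᶜ)
    (hv : v ∈ s) (hu : Γ.dist v u = j + 1) : u ∈ s ↔ Even (j + 1) := by
  have hr : Γ.Reachable v u := .of_dist_ne_zero (by omega)
  simpa [hv, hu] using h.mem_iff_mem_iff_even_dist hr

theorem egirth_eq_of_girth_eq {g : ℕ} (h : Γ.girth = g) (hg : g ≠ 0) : Γ.egirth = g := by
  have hfin : Γ.egirth ≠ ⊤ := fun htop ↦ hg (by rw [← h, girth, htop, ENat.toNat_top])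
  rw [← h, girth, ENat.natCast_toNat hfin]

variable [Fintype V]

/-- The vertices at distance `j` from `v`, for `j ≠ 0`: since `dist` is `0` between vertices in
different components, `Γ.sphere v 0` also contains those not reachable from `v`. -/
noncomputable def sphere (Γ : SimpleGraph V) (v : V) (j : ℕ) : Finset V := {w | Γ.dist v w = j}

@[simp]
theorem mem_sphere : w ∈ Γ.sphere v j ↔ Γ.dist v w = j := by simp [sphere]

variable [DecidableRel Γ.Adj] {s : Set V} {d m n k : ℕ}

theorem IsBipartiteWith.card_mul_eq_card_mul_s6 {S L : Finset V} (h : Γ.IsBipartiteWith S L)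
    (hS : ∀ u ∈ S, Γ.degree u = n) (hL : ∀ u ∈ L, Γ.degree u = m) : #S * n = #L * m := by
  have := isBipartiteWith_sum_degrees_eq h
  rwa [sum_congr rfl hS, sum_congr rfl hL, sum_const, sum_const, smul_eq_mul, smul_eq_mul] at this

theorem IsBipartiteWith.degree_sub_one_le_card_adj_sphere (h : Γ.IsBipartiteWith s sᶜ)
    (hg : ((2 * (j + 1) : ℕ) : ℕ∞) < Γ.egirth) (hu : Γ.dist v u = j + 1) :
    Γ.degree u - 1 ≤ #{z ∈ Γ.sphere v (j + 2) | Γ.Adj u z} := by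
  classical
  obtain ⟨u₀, hu₀, hd₀⟩ := exists_adj_dist_eq hu
  calc Γ.degree u - 1 = #(Γ.neighborFinset u \ {u₀}) := by
        rw [card_sdiff_of_subset (by simpa using hu₀.symm), card_singleton,
          card_neighborFinset_eq_degree]
    _ ≤ _ := card_le_card fun z hz ↦ by
        simp only [mem_sdiff, mem_neighborFinset, mem_singleton] at hz
        simp only [mem_filter, mem_sphere]
        refine ⟨?_, hz.1⟩
        have hr : Γ.Reachable v u := .of_dist_ne_zero (by omega)
        rcases h.dist_eq_add_one_or_add_one_eq hr hz.1 with h' | h'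
        · omega
        · exact absurd (eq_of_adj_of_dist_eq hg hu (by omega) hd₀ hz.1.symm hu₀) hz.2

theorem IsBipartiteWith.card_sphere_mul_le (h : Γ.IsBipartiteWith s sᶜ)
    (hg : ((2 * (j + 2) : ℕ) : ℕ∞) < Γ.egirth) (hdeg : ∀ u ∈ Γ.sphere v (j + 1), d ≤ Γ.degree u) :
    #(Γ.sphere v (j + 1)) * (d - 1) ≤ #(Γ.sphere v (j + 2)) := by
  have hg' : ((2 * (j + 1) : ℕ) : ℕ∞) < Γ.egirth := lt_of_le_of_lt (Nat.cast_le.mpr (by omega)) hg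
  simpa using card_mul_le_card_mul Γ.Adj (m := d - 1) (n := 1)
    (fun u hu ↦ (Nat.sub_le_sub_right (hdeg u hu) 1).trans
      (h.degree_sub_one_le_card_adj_sphere hg' (mem_sphere.mp hu)))
    (fun w hw ↦ card_le_one.mpr fun u₁ hu₁ u₂ hu₂ ↦ by
      simp only [bipartiteBelow, mem_filter, mem_sphere] at hu₁ hu₂
      exact eq_of_adj_of_dist_eq hg (mem_sphere.mp hw) hu₁.1 hu₂.1 hu₁.2 hu₂.2)

theorem IsBipartiteWith.le_card_sphere_two_mul_add_two (h : Γ.IsBipartiteWith s sᶜ) (hv : v ∈ s)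
    (hg : ((4 * k : ℕ) : ℕ∞) < Γ.egirth) (hs : ∀ u ∈ s, n ≤ Γ.degree u)
    (hsc : ∀ u ∉ s, m ≤ Γ.degree u) {i : ℕ} (hi : i < k) :
    n * (m - 1) ^ (i + 1) * (n - 1) ^ i ≤ #(Γ.sphere v (2 * i + 2)) := by
  have hg' (j : ℕ) (hj : j ≤ 2 * k) : ((2 * j : ℕ) : ℕ∞) < Γ.egirth :=
    lt_of_le_of_lt (Nat.cast_le.mpr (by omega)) hg
  have hdeg_even (j : ℕ) (hj : Even (j + 1)) : ∀ u ∈ Γ.sphere v (j + 1), n ≤ Γ.degree u :=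
    fun u hu ↦ hs u ((h.mem_iff_even_of_dist_eq hv (mem_sphere.mp hu)).mpr hj)
  have hdeg_odd (j : ℕ) (hj : ¬Even (j + 1)) : ∀ u ∈ Γ.sphere v (j + 1), m ≤ Γ.degree u :=
    fun u hu ↦ hsc u (hj ∘ (h.mem_iff_even_of_dist_eq hv (mem_sphere.mp hu)).mp)
  induction i with
  | zero =>
    have hv₁ : n ≤ #(Γ.sphere v 1) :=
      (hs v hv).trans <| (card_neighborFinset_eq_degree Γ v).ge.trans <|
        card_le_card fun z hz ↦ by simpa using hz
    calc n * (m - 1) ^ (0 + 1) * (n - 1) ^ 0 = n * (m - 1) := by ring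
      _ ≤ #(Γ.sphere v 1) * (m - 1) := by gcongr
      _ ≤ #(Γ.sphere v 2) :=
        h.card_sphere_mul_le (j := 0) (hg' 2 (by omega)) (hdeg_odd 0 (by decide))
  | succ i ih =>
    calc n * (m - 1) ^ (i + 1 + 1) * (n - 1) ^ (i + 1)
        = n * (m - 1) ^ (i + 1) * (n - 1) ^ i * (n - 1) * (m - 1) := by ring
      _ ≤ #(Γ.sphere v (2 * i + 2)) * (n - 1) * (m - 1) := by gcongr; exact ih (by omega)
      _ ≤ #(Γ.sphere v (2 * i + 3)) * (m - 1) := by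
        gcongr
        exact h.card_sphere_mul_le (j := 2 * i + 1) (hg' _ (by omega))
          (hdeg_even _ (by simp [parity_simps]))
      _ ≤ #(Γ.sphere v (2 * (i + 1) + 2)) :=
        h.card_sphere_mul_le (j := 2 * i + 2) (hg' _ (by omega))
          (hdeg_odd _ (by simp [parity_simps]))

theorem IsBipartiteWith.one_add_sum_le_card {S : Finset V} (h : Γ.IsBipartiteWith S (↑S)ᶜ)
    (hv : v ∈ S) (hg : ((4 * k : ℕ) : ℕ∞) < Γ.egirth) (hS : ∀ u ∈ S, n ≤ Γ.degree u)
    (hSc : ∀ u ∉ S, m ≤ Γ.degree u) :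
    1 + ∑ i ∈ range k, n * (m - 1) ^ (i + 1) * (n - 1) ^ i ≤ #S := by
  classical
  have hsub : insert v ((range k).biUnion fun i ↦ Γ.sphere v (2 * i + 2)) ⊆ S := by
    refine insert_subset hv (biUnion_subset.mpr fun i _ u hu ↦ ?_)
    exact (h.mem_iff_even_of_dist_eq (j := 2 * i + 1) hv (mem_sphere.mp hu)).mpr
      (by simp [parity_simps])
  calc 1 + ∑ i ∈ range k, n * (m - 1) ^ (i + 1) * (n - 1) ^ i
      ≤ 1 + ∑ i ∈ range k, #(Γ.sphere v (2 * i + 2)) := by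
        gcongr with i hi
        exact h.le_card_sphere_two_mul_add_two hv hg hS hSc (mem_range.mp hi)
    _ = #(insert v ((range k).biUnion fun i ↦ Γ.sphere v (2 * i + 2))) := by
        rw [card_insert_of_notMem (by simp), card_biUnion, add_comm]
        intro i _ i' _ hii'
        refine Finset.disjoint_left.mpr fun u hu hu' ↦ hii' ?_
        rw [mem_sphere] at hu hu'
        omega
    _ ≤ #S := card_le_card hsub

end SimpleGraph

theorem stmt6_general {V : Type*} [Fintype V] (Γ : SimpleGraph V) [DecidableRel Γ.Adj]
    (S L : Finset V) (m n r k x : ℕ)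
    (hr : r = 2 * k + 1)
    (hxmin : ∀ y < x, ¬ m ∣ (1 + ∑ i ∈ Finset.range k, n * (m - 1) ^ (i + 1) * (n - 1) ^ i + y) * n)
    (hpart : ∀ v : V, v ∈ S ↔ v ∉ L)
    (hbip : ∀ ⦃u v : V⦄, Γ.Adj u v → (u ∈ S ∧ v ∈ L) ∨ (u ∈ L ∧ v ∈ S))
    (hS : ∀ v ∈ S, Γ.degree v = n)
    (hL : ∀ v ∈ L, Γ.degree v = m)
    (hgirth : Γ.girth = (2 * r : ℕ)) :
    (1 + ∑ i ∈ Finset.range k, n * (m - 1) ^ (i + 1) * (n - 1) ^ i + x) * (m + n) ≤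
      (S.card + L.card) * m := by
  have hbip' : Γ.IsBipartiteWith S L := ⟨Set.disjoint_left.mpr fun v ↦ (hpart v).mp, hbip⟩
  have hLS : (L : Set V) = (↑S)ᶜ := by ext v; simp [hpart v]
  have hcard : #S * n = #L * m := hbip'.card_mul_eq_card_mul_s6 hS hL
  obtain ⟨v, hv⟩ : S.Nonempty := by
    obtain ⟨a, b, hab⟩ := ne_bot_iff_exists_adj.mp fun (hbot : Γ = ⊥) ↦ by
      rw [hbot, girth_bot] at hgirth
      omega
    rcases hbip hab with ⟨ha, -⟩ | ⟨-, hb⟩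
    exacts [⟨a, ha⟩, ⟨b, hb⟩]
  have hg : ((4 * k : ℕ) : ℕ∞) < Γ.egirth := by
    rw [egirth_eq_of_girth_eq hgirth (by omega), Nat.cast_lt]
    omega
  have hT := (hLS ▸ hbip').one_add_sum_le_card hv hg (fun u hu ↦ (hS u hu).ge)
    (fun u hu ↦ (hL u (not_not.mp (mt (hpart u).mpr hu))).ge)
  set T := 1 + ∑ i ∈ Finset.range k, n * (m - 1) ^ (i + 1) * (n - 1) ^ i
  have hTx : T + x ≤ #S := by
    by_contra! hlt
    refine hxmin (#S - T) (by omega) ?_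
    rw [Nat.add_sub_cancel' hT, hcard]
    exact dvd_mul_left m _
  calc (T + x) * (m + n) ≤ #S * (m + n) := by gcongr
    _ = (#S + #L) * m := by rw [mul_add, hcard, add_mul]

/-- Let `2 < m < n`, `r = 2k+1 ≥ 3` odd, and let `x` be the smallest nonnegative integer for
which `m` divides `(1 + n(m-1) + n(m-1)²(n-1) + ⋯ + n(m-1)^{(r-1)/2}(n-1)^{(r-3)/2} + x)·n`.
Then every bipartite biregular graph with degrees `m` and `n` and girth `2r` has at least
`(1 + ⋯ + x)·(1 + n/m)` vertices, i.e. `(|S| + |L|)·m ≥ (T + x)·(m + n)`. -/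
theorem stmt6 {V : Type*} [Fintype V] (Γ : SimpleGraph V) [DecidableRel Γ.Adj]
    (S L : Finset V) (m n r k x : ℕ) (hm : 2 < m) (hmn : m < n)
    (hr : r = 2 * k + 1) (hk : 1 ≤ k)
    (hx : m ∣ (1 + ∑ i ∈ Finset.range k, n * (m - 1) ^ (i + 1) * (n - 1) ^ i + x) * n)
    (hxmin : ∀ y < x, ¬ m ∣ (1 + ∑ i ∈ Finset.range k, n * (m - 1) ^ (i + 1) * (n - 1) ^ i + y) * n)
    (hpart : ∀ v : V, v ∈ S ↔ v ∉ L)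
    (hbip : ∀ ⦃u v : V⦄, Γ.Adj u v → (u ∈ S ∧ v ∈ L) ∨ (u ∈ L ∧ v ∈ S))
    (hS : ∀ v ∈ S, Γ.degree v = n)
    (hL : ∀ v ∈ L, Γ.degree v = m)
    (hgirth : Γ.girth = (2 * r : ℕ)) :
    (1 + ∑ i ∈ Finset.range k, n * (m - 1) ^ (i + 1) * (n - 1) ^ i + x) * (m + n) ≤
      (S.card + L.card) * m :=
  stmt6_general Γ S L m n r k x hr hxmin hpart hbip hS hL hgirth
end

section
/- Let q be a prime power. In PG(5,q), let E be an elliptic quadric Q⁻(5,q) and H a non-tangent hyperplane, so E ∩ H is a parabolic quadric Q(4,q). The generalized quadrangle Q(5,q) of order (q, q²) has (q+1)(q³+1) points and (q²+1)(q³+1) lines; deleting the q³+q²+q+1 points and (q+1)(q²+1) lines of E ∩ H leaves a structure whose incidence graph is a (q, q²+1; 8)-bipartite biregular graph of order (q²+q+1)(q³−q). -/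
/-!
Each point of `Q(5,q)` is on `q² + 1` lines, so the deleted points carry
`(q³ + q² + q + 1)(q² + 1)` incidences; the deleted lines account for `(q + 1)²(q² + 1)` of them,
which leaves exactly one for each of the `(q² + 1)(q³ − q)` remaining lines, as every line meets
the deleted points. Hence in the residual structure every point is on `q² + 1` lines and every
line has `q` points. Its incidence graph has no 4-cycles (two points span at most one line) and no
6-cycles (a generalized quadrangle has no triangles). If it had no 8-cycle either, the
`(q² + 1)(q − 1)q²(q − 1)` non-backtracking paths of length 4 starting at a fixed point would end
at distinct points other than that point, but there are only `q⁴ − q²` residual points.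
-/

/-- A finite generalized quadrangle of order `(s,t)`. -/
structure GenQuad (P L : Type*) (s t : ℕ) where
  inc : P → L → Prop
  line_pts : ∀ ℓ : L, {p : P | inc p ℓ}.ncard = s + 1
  pt_lines : ∀ p : P, {ℓ : L | inc p ℓ}.ncard = t + 1
  unique_line : ∀ ⦃p q : P⦄ ⦃ℓ ℓ' : L⦄, p ≠ q → inc p ℓ → inc q ℓ →
    inc p ℓ' → inc q ℓ' → ℓ = ℓ'
  gq : ∀ (p : P) (ℓ : L), ¬ inc p ℓ →
    ∃! q : P, inc q ℓ ∧ q ≠ p ∧ ∃ ℓ' : L, inc p ℓ' ∧ inc q ℓ'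

/-- Two distinct points are collinear if some line is incident with both. -/
def GenQuad.coll {P L : Type*} {s t : ℕ} (G : GenQuad P L s t) (p q : P) : Prop :=
  p ≠ q ∧ ∃ ℓ : L, G.inc p ℓ ∧ G.inc q ℓ

open Function SimpleGraph

lemma Set.ncard_setOf_eq_card_filter {α : Type*} [Fintype α] (p : α → Prop) [DecidablePred p] :
    {x | p x}.ncard = (Finset.univ.filter p).card := by
  rw [← Set.ncard_coe_finset, Finset.coe_filter_univ]

lemma Set.ncard_subtype_compl_of_forall {α : Type*} {S : Set α} {Q : α → Prop}
    (h : ∀ x, Q x → x ∉ S) : {x : {x // x ∉ S} | Q x}.ncard = {x | Q x}.ncard :=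
  (Set.ncard_subtype (· ∉ S) {x | Q x}).trans (congrArg Set.ncard (Set.inter_eq_left.2 h))

lemma Set.ncard_subtype_compl_add_ncard_sep {α : Type*} {S : Set α} {Q : α → Prop}
    (hQ : {x | Q x}.Finite) :
    {x : {x // x ∉ S} | Q x}.ncard + {x ∈ S | Q x}.ncard = {x | Q x}.ncard := by
  rw [show {x : {x // x ∉ S} | Q x}.ncard = _ from Set.ncard_subtype (· ∉ S) {x | Q x}, add_comm]
  convert Set.ncard_inter_add_ncard_sdiff_eq_ncard {x | Q x} S hQ using 2
  · exact congrArg Set.ncard (Set.inter_comm S {x | Q x})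
  · rfl

lemma Finset.card_sigma_of_forall_card_eq {ι : Type*} {σ : ι → Type*} {s : Finset ι}
    {f : ∀ i, Finset (σ i)} {n : ℕ} (h : ∀ i ∈ s, (f i).card = n) :
    (s.sigma f).card = s.card * n := by
  rw [Finset.card_sigma, Finset.sum_const_nat h]

lemma SimpleGraph.Walk.IsCycle.getVert_ne_getVert {V : Type*} {G : SimpleGraph V} {u : V}
    {w : G.Walk u u} (hw : w.IsCycle) {i j : ℕ} (hi : 1 ≤ i) (hij : i < j) (hj : j ≤ w.length) :
    w.getVert i ≠ w.getVert j :=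
  fun h => hij.ne (hw.getVert_injOn ⟨hi, by omega⟩ ⟨by omega, hj⟩ h)

namespace Incidence

variable {P L : Type*} (I : P → L → Prop)

def IsPartialLinear : Prop :=
  ∀ ⦃p p' : P⦄ ⦃l l' : L⦄, p ≠ p' → I p l → I p' l → I p l' → I p' l' → l = l'

-- The generalized-quadrangle form of the absence of triangles.
def IsTriangleFree : Prop :=
  ∀ ⦃c a b : P⦄ ⦃n : L⦄, ¬ I c n → I a n → I b n →
    (∃ m, I c m ∧ I a m) → (∃ m, I c m ∧ I b m) → a = b

-- Non-backtracking paths `p₀ - ℓ - a - m - z`, encoded as `⟨ℓ, a, m, z⟩`.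
open Classical in
noncomputable def fourPaths [Fintype P] [Fintype L] (p₀ : P) :
    Finset (Σ _ : L, Σ _ : P, Σ _ : L, P) :=
  ({l | I p₀ l} : Finset L).sigma fun ℓ => (({a | I a ℓ} : Finset P).erase p₀).sigma fun a =>
    (({m | I a m} : Finset L).erase ℓ).sigma fun m => ({z | I z m} : Finset P).erase a

variable {I}

lemma IsPartialLinear.comap {P' L' : Type*} (hI : IsPartialLinear I) {f : P' → P} {g : L' → L}
    (hf : Injective f) (hg : Injective g) : IsPartialLinear fun p l => I (f p) (g l) :=
  fun _ _ _ _ hp h₁ h₂ h₃ h₄ => hg (hI (hf.ne hp) h₁ h₂ h₃ h₄)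

lemma IsTriangleFree.comap {P' L' : Type*} (hI : IsTriangleFree I) {f : P' → P} {g : L' → L}
    (hf : Injective f) : IsTriangleFree fun p l => I (f p) (g l) :=
  fun _ _ _ _ hc ha hb ⟨m, hm⟩ ⟨m', hm'⟩ => hf (hI hc ha hb ⟨g m, hm⟩ ⟨g m', hm'⟩)

lemma mem_fourPaths [Fintype P] [Fintype L] {p₀ : P} {x : Σ _ : L, Σ _ : P, Σ _ : L, P} :
    x ∈ fourPaths I p₀ ↔ I p₀ x.1 ∧ (x.2.1 ≠ p₀ ∧ I x.2.1 x.1) ∧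
      (x.2.2.1 ≠ x.1 ∧ I x.2.1 x.2.2.1) ∧ (x.2.2.2 ≠ x.2.1 ∧ I x.2.2.2 x.2.2.1) := by
  simp [fourPaths]

lemma endpoint_ne_of_mem_fourPaths [Fintype P] [Fintype L] (hI : IsPartialLinear I) {p₀ : P}
    {x : Σ _ : L, Σ _ : P, Σ _ : L, P} (hx : x ∈ fourPaths I p₀) : x.2.2.2 ≠ p₀ := by
  obtain ⟨hp₀ℓ, ⟨hap₀, haℓ⟩, ⟨hmℓ, ham⟩, -, hzm⟩ := mem_fourPaths.1 hx
  exact fun h => hmℓ (hI hap₀ ham (h ▸ hzm) haℓ hp₀ℓ)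

open Finset in
lemma card_fourPaths [Fintype P] [Fintype L] {s t : ℕ} (hpt : ∀ p, {l | I p l}.ncard = t + 1)
    (hln : ∀ l, {p | I p l}.ncard = s + 1) (p₀ : P) :
    (fourPaths I p₀).card = (t + 1) * (s * (t * s)) := by
  classical
  have hlines (p : P) : #{l | I p l} = t + 1 := (Set.ncard_setOf_eq_card_filter _).symm.trans (hpt p)
  have hpts (l : L) : #{p | I p l} = s + 1 := (Set.ncard_setOf_eq_card_filter _).symm.trans (hln l)
  rw [fourPaths, card_sigma_of_forall_card_eq, hlines]
  intro ℓ hℓ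
  rw [card_sigma_of_forall_card_eq, card_erase_of_mem (by simpa using hℓ), hpts,
    add_tsub_cancel_right]
  intro a ha
  rw [card_sigma_of_forall_card_eq, card_erase_of_mem (by simpa using (mem_erase.1 ha).2), hlines,
    add_tsub_cancel_right]
  intro m hm
  rw [card_erase_of_mem (by simpa using (mem_erase.1 hm).2), hpts, add_tsub_cancel_right]

end Incidence

open Incidence

open Finset in
theorem ncard_sep_eq_one_of_card_eq {P L : Type*} [Finite P] [Finite L] {I : P → L → Prop}
    {Pd : Set P} {Ld : Set L} {r k : ℕ}
    (hpt : ∀ p ∈ Pd, {ℓ | I p ℓ}.ncard = r) (hln : ∀ ℓ ∈ Ld, {p | I p ℓ}.ncard = k)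
    (hsub : ∀ ℓ ∈ Ld, ∀ p, I p ℓ → p ∈ Pd) (hmeet : ∀ ℓ, ∃ p ∈ Pd, I p ℓ)
    (hcount : Pd.ncard * r = Ld.ncard * k + Ldᶜ.ncard) :
    ∀ ℓ ∉ Ld, {p ∈ Pd | I p ℓ}.ncard = 1 := by
  classical
  cases nonempty_fintype P
  cases nonempty_fintype L
  let c (ℓ : L) : ℕ := #{p | p ∈ Pd ∧ I p ℓ}
  have hc (ℓ : L) : {p ∈ Pd | I p ℓ}.ncard = c ℓ := Set.ncard_setOf_eq_card_filter _
  have hdouble : ∑ ℓ, c ℓ = Pd.ncard * r := calc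
    ∑ ℓ, c ℓ = ∑ ℓ, #((univ.filter (· ∈ Pd)).bipartiteBelow I ℓ) := by
      simp only [c, bipartiteBelow, filter_filter]
    _ = ∑ p with p ∈ Pd, #(univ.bipartiteAbove I p) :=
      (sum_card_bipartiteAbove_eq_sum_card_bipartiteBelow _).symm
    _ = ∑ p with p ∈ Pd, r := sum_congr rfl fun p hp => by
      rw [bipartiteAbove, ← Set.ncard_setOf_eq_card_filter, hpt p (by simpa using hp)]
    _ = Pd.ncard * r := by
      rw [sum_const, smul_eq_mul, ← Set.ncard_setOf_eq_card_filter, Set.ofPred_mem_eq]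
  have hLd : ∑ ℓ with ℓ ∈ Ld, c ℓ = Ld.ncard * k := by
    rw [sum_const_nat fun ℓ hℓ => ?_, ← Set.ncard_setOf_eq_card_filter, Set.ofPred_mem_eq]
    rw [← hc, ← hln ℓ (by simpa using hℓ)]
    congr 1
    ext p
    exact and_iff_right_of_imp (hsub ℓ (by simpa using hℓ) p)
  have hrest : ∑ ℓ with ℓ ∉ Ld, c ℓ = ∑ ℓ with ℓ ∉ Ld, 1 := by
    have hsplit := sum_filter_add_sum_filter_not univ (· ∈ Ld) c
    rw [hdouble, hLd, hcount] at hsplit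
    rw [sum_const, smul_eq_mul, mul_one, ← Set.ncard_setOf_eq_card_filter]
    exact Nat.add_left_cancel hsplit
  intro ℓ hℓ
  rw [hc]
  refine ((sum_eq_sum_iff_of_le fun ℓ hℓ => ?_).1 hrest.symm ℓ (by simpa using hℓ)).symm
  obtain ⟨p, hp, hpℓ⟩ := hmeet ℓ
  exact card_pos.2 ⟨p, by simp [hp, hpℓ]⟩

lemma GenQuad.isPartialLinear {P L : Type*} {s t : ℕ} (G : GenQuad P L s t) :
    IsPartialLinear G.inc :=
  G.unique_line

lemma GenQuad.isTriangleFree {P L : Type*} {s t : ℕ} (G : GenQuad P L s t) :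
    IsTriangleFree G.inc := by
  intro c a b n hc ha hb hca hcb
  obtain ⟨u, -, hu⟩ := G.gq c n hc
  exact (hu a ⟨ha, fun h => hc (h ▸ ha), hca⟩).trans (hu b ⟨hb, fun h => hc (h ▸ hb), hcb⟩).symm

lemma GenQuad.ncard_residual_lines_through {P L : Type*} {s t : ℕ} (G : GenQuad P L s t)
    {Pd : Set P} {Ld : Set L} (hsub : ∀ ℓ ∈ Ld, ∀ p, G.inc p ℓ → p ∈ Pd) (p : {p // p ∉ Pd}) :
    {ℓ : {ℓ : L // ℓ ∉ Ld} | G.inc p ℓ}.ncard = t + 1 :=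
  (Set.ncard_subtype_compl_of_forall fun ℓ hpℓ hℓ => p.2 (hsub ℓ hℓ p hpℓ)).trans (G.pt_lines p)

lemma GenQuad.ncard_residual_points_on {P L : Type*} {s t : ℕ} (G : GenQuad P L s t)
    {Pd : Set P} {ℓ : L} (hℓ : {p ∈ Pd | G.inc p ℓ}.ncard = 1) :
    {p : {p : P // p ∉ Pd} | G.inc p ℓ}.ncard = s := by
  have := Set.ncard_subtype_compl_add_ncard_sep (S := Pd)
    (Set.finite_of_ncard_ne_zero (by rw [G.line_pts ℓ]; omega))
  rw [hℓ, G.line_pts] at this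
  omega

namespace incGraph

variable {P L : Type*} {I : P → L → Prop}

@[simp] lemma adj_inl_inr {p : P} {l : L} : (incGraph I).Adj (.inl p) (.inr l) ↔ I p l := Iff.rfl

@[simp] lemma adj_inr_inl {p : P} {l : L} : (incGraph I).Adj (.inr l) (.inl p) ↔ I p l := Iff.rfl

@[simp] lemma not_adj_inl_inl {p p' : P} : ¬ (incGraph I).Adj (.inl p) (.inl p') := id

@[simp] lemma not_adj_inr_inr {l l' : L} : ¬ (incGraph I).Adj (.inr l) (.inr l') := id

lemma exists_eq_inr_of_adj {p : P} {x : P ⊕ L} (h : (incGraph I).Adj (.inl p) x) :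
    ∃ l, x = .inr l ∧ I p l := by
  rcases x with p' | l
  · exact (not_adj_inl_inl h).elim
  · exact ⟨l, rfl, h⟩

lemma exists_eq_inl_of_adj {l : L} {x : P ⊕ L} (h : (incGraph I).Adj (.inr l) x) :
    ∃ p, x = .inl p ∧ I p l := by
  rcases x with p | l'
  · exact ⟨p, rfl, h⟩
  · exact (not_adj_inr_inr h).elim

lemma neighborSet_inl (p : P) : (incGraph I).neighborSet (.inl p) = .inr '' {l | I p l} := by
  ext (p' | l) <;> simp

lemma neighborSet_inr (l : L) : (incGraph I).neighborSet (.inr l) = .inl '' {p | I p l} := by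
  ext (p | l') <;> simp

lemma ncard_neighborSet_inl (p : P) :
    ((incGraph I).neighborSet (.inl p)).ncard = {l | I p l}.ncard := by
  rw [neighborSet_inl, Set.ncard_image_of_injective _ Sum.inr_injective]

lemma ncard_neighborSet_inr (l : L) :
    ((incGraph I).neighborSet (.inr l)).ncard = {p | I p l}.ncard := by
  rw [neighborSet_inr, Set.ncard_image_of_injective _ Sum.inl_injective]

def sideColoring : (incGraph I).Coloring Bool :=
  Coloring.mk Sum.isLeft <| by rintro (p | l) (p' | l') h <;> simp_all

lemma even_length_of_loop {v : P ⊕ L} (w : (incGraph I).Walk v v) : Even w.length :=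
  (sideColoring.even_length_iff_congr w).mpr Iff.rfl

lemma exists_getVert_succ_eq_inr {u v : P ⊕ L} (w : (incGraph I).Walk u v) {i : ℕ}
    (hi : i < w.length) {p : P} (h : w.getVert i = .inl p) :
    ∃ l, w.getVert (i + 1) = .inr l ∧ I p l :=
  exists_eq_inr_of_adj (h ▸ w.adj_getVert_succ hi)

lemma exists_getVert_succ_eq_inl {u v : P ⊕ L} (w : (incGraph I).Walk u v) {i : ℕ}
    (hi : i < w.length) {l : L} (h : w.getVert i = .inr l) :
    ∃ p, w.getVert (i + 1) = .inl p ∧ I p l :=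
  exists_eq_inl_of_adj (h ▸ w.adj_getVert_succ hi)

lemma exists_isCycle_inl {v : P ⊕ L} {w : (incGraph I).Walk v v} (hw : w.IsCycle) :
    ∃ (p : P) (w' : (incGraph I).Walk (.inl p) (.inl p)), w'.IsCycle ∧ w'.length = w.length := by
  classical
  rcases v with p | l
  · exact ⟨p, w, hw, rfl⟩
  · cases w with
    | nil => exact (hw.ne_nil rfl).elim
    | cons h w' =>
      obtain ⟨p, rfl, -⟩ := exists_eq_inl_of_adj h
      have hp : Sum.inl p ∈ (Walk.cons h w').support := by simp
      exact ⟨p, _, hw.rotate hp, Walk.length_rotate _ _ hp⟩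

lemma length_ne_four (hI : IsPartialLinear I) {v : P ⊕ L} {w : (incGraph I).Walk v v}
    (hw : w.IsCycle) : w.length ≠ 4 := by
  obtain ⟨p, w, hw, hlen⟩ := exists_isCycle_inl hw
  rw [← hlen]
  intro h4
  obtain ⟨l₁, hv₁, hpl₁⟩ := exists_getVert_succ_eq_inr w (i := 0) (by omega) w.getVert_zero
  obtain ⟨p₂, hv₂, hp₂l₁⟩ := exists_getVert_succ_eq_inl w (i := 1) (by omega) hv₁
  obtain ⟨l₃, hv₃, hp₂l₃⟩ := exists_getVert_succ_eq_inr w (i := 2) (by omega) hv₂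
  obtain ⟨p₄, hv₄, hp₄l₃⟩ := exists_getVert_succ_eq_inl w (i := 3) (by omega) hv₃
  obtain rfl : p₄ = p :=
    Sum.inl_injective (hv₄.symm.trans ((congrArg w.getVert h4).symm.trans w.getVert_length))
  have hp : p₂ ≠ p₄ := fun h =>
    hw.getVert_ne_getVert (i := 2) (j := 4) (by omega) (by omega) h4.ge (by rw [hv₂, hv₄, h])
  have hl : l₁ ≠ l₃ := fun h =>
    hw.getVert_ne_getVert (i := 1) (j := 3) le_rfl (by omega) (by omega) (by rw [hv₁, hv₃, h])
  exact hl (hI hp hp₂l₁ hpl₁ hp₂l₃ hp₄l₃)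

lemma length_ne_six (hI : IsPartialLinear I) (hT : IsTriangleFree I) {v : P ⊕ L}
    {w : (incGraph I).Walk v v} (hw : w.IsCycle) : w.length ≠ 6 := by
  obtain ⟨p, w, hw, hlen⟩ := exists_isCycle_inl hw
  rw [← hlen]
  intro h6
  obtain ⟨l₁, hv₁, hpl₁⟩ := exists_getVert_succ_eq_inr w (i := 0) (by omega) w.getVert_zero
  obtain ⟨p₂, hv₂, hp₂l₁⟩ := exists_getVert_succ_eq_inl w (i := 1) (by omega) hv₁
  obtain ⟨l₃, hv₃, hp₂l₃⟩ := exists_getVert_succ_eq_inr w (i := 2) (by omega) hv₂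
  obtain ⟨p₄, hv₄, hp₄l₃⟩ := exists_getVert_succ_eq_inl w (i := 3) (by omega) hv₃
  obtain ⟨l₅, hv₅, hp₄l₅⟩ := exists_getVert_succ_eq_inr w (i := 4) (by omega) hv₄
  obtain ⟨p₆, hv₆, hp₆l₅⟩ := exists_getVert_succ_eq_inl w (i := 5) (by omega) hv₅
  obtain rfl : p₆ = p :=
    Sum.inl_injective (hv₆.symm.trans ((congrArg w.getVert h6).symm.trans w.getVert_length))
  have hp₂₆ : p₂ ≠ p₆ := fun h =>
    hw.getVert_ne_getVert (i := 2) (j := 6) (by omega) (by omega) h6.ge (by rw [hv₂, hv₆, h])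
  have hp₂₄ : p₂ ≠ p₄ := fun h =>
    hw.getVert_ne_getVert (i := 2) (j := 4) (by omega) (by omega) (by omega) (by rw [hv₂, hv₄, h])
  have hl : l₁ ≠ l₃ := fun h =>
    hw.getVert_ne_getVert (i := 1) (j := 3) le_rfl (by omega) (by omega) (by rw [hv₁, hv₃, h])
  have hp₆l₃ : ¬ I p₆ l₃ := fun h => hl (hI hp₂₆.symm hpl₁ hp₂l₁ h hp₂l₃)
  exact hp₂₄ (hT hp₆l₃ hp₂l₃ hp₄l₃ ⟨l₁, hpl₁, hp₂l₁⟩ ⟨l₅, hp₆l₅, hp₄l₅⟩)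

lemma eight_le_length (hI : IsPartialLinear I) (hT : IsTriangleFree I) {v : P ⊕ L}
    {w : (incGraph I).Walk v v} (hw : w.IsCycle) : 8 ≤ w.length := by
  have h3 := hw.three_le_length
  have h4 := length_ne_four hI hw
  have h6 := length_ne_six hI hT hw
  obtain ⟨k, hk⟩ := even_length_of_loop w
  omega

lemma girth_eq_eight (hI : IsPartialLinear I) (hT : IsTriangleFree I) {v : P ⊕ L}
    {w : (incGraph I).Walk v v} (hw : w.IsCycle) (h8 : w.length = 8) :
    (incGraph I).girth = 8 := by
  refine le_antisymm (h8 ▸ girth_le_length hw) ?_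
  obtain ⟨u, c, hc, hg⟩ := exists_girth_eq_length.mpr fun h => h w hw
  exact hg ▸ eight_le_length hI hT hc

lemma exists_isCycle_length_eight_of_nodup {p₁ p₂ p₃ p₄ : P} {l₁ l₂ l₃ l₄ : L}
    (hp : [p₁, p₂, p₃, p₄].Nodup) (hl : [l₁, l₂, l₃, l₄].Nodup)
    (h₁ : I p₁ l₁) (h₂ : I p₂ l₁) (h₃ : I p₂ l₂) (h₄ : I p₃ l₂)
    (h₅ : I p₃ l₃) (h₆ : I p₄ l₃) (h₇ : I p₄ l₄) (h₈ : I p₁ l₄) :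
    ∃ w : (incGraph I).Walk (.inl p₁) (.inl p₁), w.IsCycle ∧ w.length = 8 := by
  let path : (incGraph I).Walk (.inr l₁) (.inl p₁) :=
    .cons (adj_inr_inl.2 h₂) <| .cons (adj_inl_inr.2 h₃) <| .cons (adj_inr_inl.2 h₄) <|
    .cons (adj_inl_inr.2 h₅) <| .cons (adj_inr_inl.2 h₆) <| .cons (adj_inl_inr.2 h₇) <|
    .cons (adj_inr_inl.2 h₈) .nil
  refine ⟨.cons (adj_inl_inr.2 h₁) path, ?_, rfl⟩
  rw [Walk.cons_isCycle_iff, Walk.isPath_def]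
  simp_all [path, eq_comm]

/-- Two non-backtracking paths `p₀ - ℓ - a - m - z` and `p₀ - ℓ' - a' - m' - z` with `a ≠ a'`
close up to a cycle of length eight. -/
lemma exists_isCycle_length_eight_of_paths (hI : IsPartialLinear I) (hT : IsTriangleFree I)
    {p₀ a a' z : P} {ℓ ℓ' m m' : L}
    (hp₀ℓ : I p₀ ℓ) (haℓ : I a ℓ) (ham : I a m) (hzm : I z m)
    (hp₀ℓ' : I p₀ ℓ') (ha'ℓ' : I a' ℓ') (ha'm' : I a' m') (hzm' : I z m')
    (hap₀ : a ≠ p₀) (hmℓ : m ≠ ℓ) (hza : z ≠ a) (ha'p₀ : a' ≠ p₀) (hm'ℓ' : m' ≠ ℓ') (hza' : z ≠ a')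
    (haa' : a ≠ a') :
    ∃ w : (incGraph I).Walk (.inl p₀) (.inl p₀), w.IsCycle ∧ w.length = 8 := by
  have hzp₀ : z ≠ p₀ := by
    rintro rfl
    exact hmℓ (hI hap₀ ham hzm haℓ hp₀ℓ)
  have hzℓ : ¬ I z ℓ := fun h => hmℓ (hI hza.symm ham hzm haℓ h)
  have hp₀m : ¬ I p₀ m := fun h => hmℓ (hI hap₀ ham h haℓ hp₀ℓ)
  have hℓℓ' : ℓ ≠ ℓ' := by
    rintro rfl
    exact haa' (hT hzℓ haℓ ha'ℓ' ⟨m, hzm, ham⟩ ⟨m', hzm', ha'm'⟩)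
  have hmm' : m ≠ m' := by
    rintro rfl
    exact haa' (hT hp₀m ham ha'm' ⟨ℓ, hp₀ℓ, haℓ⟩ ⟨ℓ', hp₀ℓ', ha'ℓ'⟩)
  have hℓm' : ℓ ≠ m' := by
    rintro rfl
    exact hzℓ hzm'
  have hmℓ' : m ≠ ℓ' := by
    rintro rfl
    exact hp₀m hp₀ℓ'
  exact exists_isCycle_length_eight_of_nodup (p₂ := a) (p₃ := z) (p₄ := a') (l₂ := m) (l₃ := m')
    (by simp [hap₀.symm, hzp₀.symm, ha'p₀.symm, hza.symm, haa', hza'])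
    (by simp [hmℓ.symm, hℓm', hℓℓ', hmm', hmℓ', hm'ℓ'])
    hp₀ℓ haℓ ham hzm hzm' ha'm' ha'ℓ' hp₀ℓ'

lemma injOn_endpoint_fourPaths [Fintype P] [Fintype L] (hI : IsPartialLinear I)
    (hT : IsTriangleFree I) {p₀ : P}
    (hno : ¬ ∃ w : (incGraph I).Walk (.inl p₀) (.inl p₀), w.IsCycle ∧ w.length = 8) :
    Set.InjOn (fun x : Σ _ : L, Σ _ : P, Σ _ : L, P => x.2.2.2) (fourPaths I p₀) := by
  rintro ⟨ℓ, a, m, z⟩ hx ⟨ℓ', a', m', z'⟩ hy (rfl : z = z')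
  obtain ⟨hp₀ℓ, ⟨hap₀, haℓ⟩, ⟨hmℓ, ham⟩, hza, hzm⟩ := mem_fourPaths.1 hx
  obtain ⟨hp₀ℓ', ⟨ha'p₀, ha'ℓ'⟩, ⟨hm'ℓ', ha'm'⟩, hza', hzm'⟩ := mem_fourPaths.1 hy
  by_cases haa' : a = a'
  · subst haa'
    obtain rfl := hI hap₀ haℓ hp₀ℓ ha'ℓ' hp₀ℓ'
    obtain rfl := hI hza.symm ham hzm ha'm' hzm'
    rfl
  · exact (hno (exists_isCycle_length_eight_of_paths hI hT hp₀ℓ haℓ ham hzm hp₀ℓ' ha'ℓ'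
      ha'm' hzm' hap₀ hmℓ hza ha'p₀ hm'ℓ' hza' haa')).elim

theorem exists_isCycle_length_eight_of_card_le [Finite P] [Finite L]
    (hI : IsPartialLinear I) (hT : IsTriangleFree I) {s t : ℕ}
    (hpt : ∀ p, {l | I p l}.ncard = t + 1) (hln : ∀ l, {p | I p l}.ncard = s + 1) (p₀ : P)
    (hcard : Nat.card P ≤ (t + 1) * (s * (t * s))) :
    ∃ w : (incGraph I).Walk (.inl p₀) (.inl p₀), w.IsCycle ∧ w.length = 8 := by
  classical
  cases nonempty_fintype P
  cases nonempty_fintype L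
  by_contra hno
  have hmaps : ∀ x ∈ fourPaths I p₀, x.2.2.2 ∈ Finset.univ.erase p₀ := fun x hx =>
    Finset.mem_erase.2 ⟨endpoint_ne_of_mem_fourPaths hI hx, Finset.mem_univ _⟩
  have := (Finset.card_le_card_of_injOn _ hmaps (injOn_endpoint_fourPaths hI hT hno)).trans_lt
    (Finset.card_erase_lt_of_mem (Finset.mem_univ p₀))
  rw [card_fourPaths hpt hln, Finset.card_univ, ← Nat.card_eq_fintype_card] at this
  exact this.not_ge hcard

end incGraph

/-- The generalized quadrangle `Q(5,q)` of order `(q, q²)` has `(q+1)(q³+1)` points and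
`(q²+1)(q³+1)` lines; deleting the `q³+q²+q+1` points and `(q+1)(q²+1)` lines of a parabolic
quadric hyperplane section `E ∩ H` (each deleted line having all its points deleted, each
line meeting the section) leaves a structure whose incidence graph is a
`(q, q²+1; 8)`-bipartite biregular graph of order `(q²+q+1)(q³−q)`. -/
theorem stmt17 {P L : Type*} [Finite P] [Finite L] (q : ℕ) (hq : IsPrimePow q)
    (G : GenQuad P L q (q ^ 2))
    (hP : Nat.card P = (q + 1) * (q ^ 3 + 1)) (hL : Nat.card L = (q ^ 2 + 1) * (q ^ 3 + 1))
    (Pd : Set P) (Ld : Set L)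
    (hPd : Pd.ncard = q ^ 3 + q ^ 2 + q + 1) (hLd : Ld.ncard = (q + 1) * (q ^ 2 + 1))
    (hsub : ∀ ℓ ∈ Ld, ∀ p : P, G.inc p ℓ → p ∈ Pd)
    (hmeet : ∀ ℓ : L, ∃ p ∈ Pd, G.inc p ℓ) :
    (∀ ℓ : L, ℓ ∉ Ld → {p ∈ Pd | G.inc p ℓ}.ncard = 1) ∧
    (let Γ := incGraph (fun (p : {p : P // p ∉ Pd}) (ℓ : {ℓ : L // ℓ ∉ Ld}) => G.inc p.1 ℓ.1)
     Γ.girth = 8 ∧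
     (∀ p : {p : P // p ∉ Pd}, (Γ.neighborSet (Sum.inl p)).ncard = q ^ 2 + 1) ∧
     (∀ ℓ : {ℓ : L // ℓ ∉ Ld}, (Γ.neighborSet (Sum.inr ℓ)).ncard = q) ∧
     Nat.card ({p : P // p ∉ Pd} ⊕ {ℓ : L // ℓ ∉ Ld}) = (q ^ 2 + q + 1) * (q ^ 3 - q)) := by
  have hq2 := hq.two_le
  obtain ⟨s, rfl⟩ : ∃ s, q = s + 1 := ⟨q - 1, by omega⟩
  have hPdc : Pdᶜ.ncard + (s + 1) ^ 2 = (s + 1) ^ 4 := by linarith [Set.ncard_add_ncard_compl Pd]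
  have hcube : (s + 1) ^ 3 - (s + 1) = s * (s + 1) * (s + 2) := Nat.sub_eq_of_eq_add (by ring)
  have hLdc : Ldᶜ.ncard = ((s + 1) ^ 2 + 1) * (s * (s + 1) * (s + 2)) := by
    linarith [Set.ncard_add_ncard_compl Ld]
  have hone := ncard_sep_eq_one_of_card_eq (fun p _ => G.pt_lines p) (fun ℓ _ => G.line_pts ℓ)
    hsub hmeet (by rw [hPd, hLd, hLdc]; ring)
  let I (p : {p : P // p ∉ Pd}) (ℓ : {ℓ : L // ℓ ∉ Ld}) : Prop := G.inc p ℓ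
  have hI : IsPartialLinear I := G.isPartialLinear.comap Subtype.val_injective Subtype.val_injective
  have hT : IsTriangleFree I := G.isTriangleFree.comap Subtype.val_injective
  have hpt := G.ncard_residual_lines_through hsub
  have hln (ℓ : {ℓ : L // ℓ ∉ Ld}) := G.ncard_residual_points_on (hone ℓ ℓ.2)
  have hPd' : Nat.card {p : P // p ∉ Pd} = Pdᶜ.ncard := Nat.card_coe_set_eq Pdᶜ
  have hLd' : Nat.card {ℓ : L // ℓ ∉ Ld} = Ldᶜ.ncard := Nat.card_coe_set_eq Ldᶜ
  obtain ⟨p₀⟩ : Nonempty {p : P // p ∉ Pd} := by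
    have : (s + 1) ^ 2 < (s + 1) ^ 4 := Nat.pow_lt_pow_right (by omega) (by norm_num)
    exact (Nat.card_pos_iff.1 (by omega)).1
  obtain ⟨w, hw, h8⟩ := incGraph.exists_isCycle_length_eight_of_card_le hI hT hpt hln p₀
    (by rw [hPd']; nlinarith)
  refine ⟨hone, incGraph.girth_eq_eight hI hT hw h8,
    fun p => (incGraph.ncard_neighborSet_inl p).trans (hpt p),
    fun ℓ => (incGraph.ncard_neighborSet_inr ℓ).trans (hln ℓ), ?_⟩
  rw [Nat.card_sum, hPd', hLd', hLdc, hcube]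
  linarith
end

section
/- Let r ≥ 4 be even and let G be a finite projective generalized r-gon of order (m,n) with ambient space PG(d,q), and H a hyperplane containing exactly u points of G. If v denotes the number of lines of G entirely contained in H, then counting incidences of remaining points with remaining lines (each remaining line meets H in exactly one point of G) gives (n+1)·((m+1)·((mn)^{r/2}−1)/(mn−1) − u) = m·((n+1)·((mn)^{r/2}−1)/(mn−1) − v), so the number of remaining lines equals (n+1)/m times the number of remaining points. -/
/-- Let `r ≥ 4` be even and let `G` be a finite projective generalized `r`-gon of order
`(m,n)` (every line has `m+1` points, every point is on `n+1` lines, with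
`(m+1)((mn)^{r/2}−1)/(mn−1)` points and `(n+1)((mn)^{r/2}−1)/(mn−1)` lines), `H` a
hyperplane containing exactly `u` points of `G` and `v` lines of `G` (each deleted line
having all its points deleted, each remaining line containing exactly one deleted point).
Then `(n+1)·(#points − u) = m·(#lines − v)`, so the number of remaining lines equals
`(n+1)/m` times the number of remaining points. -/
theorem stmt19 {P L : Type*} [Finite P] [Finite L] (r m n q u v : ℕ)
    (hr : 4 ≤ r) (hre : Even r) (hm : 2 ≤ m) (hmn : m ≤ n) (hq : IsPrimePow q)
    (I : P → L → Prop) (Pd : Set P) (Ld : Set L)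
    (hlines : ∀ ℓ : L, {p : P | I p ℓ}.ncard = m + 1)
    (hpoints : ∀ p : P, {ℓ : L | I p ℓ}.ncard = n + 1)
    (hP : Nat.card P = (m + 1) * ((m * n) ^ (r / 2) - 1) / (m * n - 1))
    (hL : Nat.card L = (n + 1) * ((m * n) ^ (r / 2) - 1) / (m * n - 1))
    (hu : Pd.ncard = u) (hv : Ld.ncard = v)
    (hsub : ∀ ℓ ∈ Ld, ∀ p : P, I p ℓ → p ∈ Pd)
    (hone : ∀ ℓ : L, ℓ ∉ Ld → {p ∈ Pd | I p ℓ}.ncard = 1) :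
    (n + 1) * ((m + 1) * ((m * n) ^ (r / 2) - 1) / (m * n - 1) - u) =
      m * ((n + 1) * ((m * n) ^ (r / 2) - 1) / (m * n - 1) - v) ∧
    m * {ℓ : L | ℓ ∉ Ld}.ncard = (n + 1) * {p : P | p ∉ Pd}.ncard := by

  classical
  have _ : Fintype P := Fintype.ofFinite P
  have _ : Fintype L := Fintype.ofFinite L
  set A : Finset P := Finset.univ.filter (fun p => p ∉ Pd) with hAdef
  set B : Finset L := Finset.univ.filter (fun ℓ => ℓ ∉ Ld) with hBdef
  have hA : ∀ ℓ ∉ Ld, (A.filter fun p => I p ℓ).card = m := by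
    intro ℓ hℓ
    have h1 := hlines ℓ
    have h2 := hone ℓ hℓ
    have hsplit : {p : P | I p ℓ} = {p ∈ Pd | I p ℓ} ∪ {p : P | p ∉ Pd ∧ I p ℓ} := by
      ext p; by_cases hp : p ∈ Pd <;> simp [hp]
    have hd : Disjoint {p ∈ Pd | I p ℓ} {p : P | p ∉ Pd ∧ I p ℓ} := by
      rw [Set.disjoint_left]
      rintro p ⟨hp, -⟩ ⟨hp', -⟩
      exact hp' hp
    have hun := Set.ncard_union_eq hd (Set.toFinite _) (Set.toFinite _)
    rw [← hsplit, h1, h2] at hun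
    have hx : {p : P | p ∉ Pd ∧ I p ℓ}.ncard = m := by omega
    have hfe : (A.filter fun p => I p ℓ) = {p : P | p ∉ Pd ∧ I p ℓ}.toFinset := by
      ext p; simp [hAdef]
    rw [hfe, ← Set.ncard_eq_toFinset_card', hx]
  have hB : ∀ p ∉ Pd, (B.filter fun ℓ => I p ℓ).card = n + 1 := by
    intro p hp
    have hset : {ℓ : L | ℓ ∉ Ld ∧ I p ℓ} = {ℓ : L | I p ℓ} := by
      ext ℓ
      simp only [Set.mem_setOf_eq, and_iff_right_iff_imp]
      intro hi hℓ
      exact hp (hsub ℓ hℓ p hi)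
    have hfe : (B.filter fun ℓ => I p ℓ) = {ℓ : L | ℓ ∉ Ld ∧ I p ℓ}.toFinset := by
      ext ℓ; simp [hBdef]
    rw [hfe, ← Set.ncard_eq_toFinset_card', hset, hpoints p]
  have key : m * B.card = (n + 1) * A.card := by
    have h1 : ∑ ℓ ∈ B, (A.filter fun p => I p ℓ).card
        = ∑ p ∈ A, (B.filter fun ℓ => I p ℓ).card := by
      simp only [Finset.card_filter]
      rw [Finset.sum_comm]
    have h2 : ∑ ℓ ∈ B, (A.filter fun p => I p ℓ).card = m * B.card := by
      rw [Finset.sum_congr rfl fun ℓ hℓ => hA ℓ (by simpa [hBdef] using hℓ)]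
      simp [mul_comm]
    have h3 : ∑ p ∈ A, (B.filter fun ℓ => I p ℓ).card = (n + 1) * A.card := by
      rw [Finset.sum_congr rfl fun p hp => hB p (by simpa [hAdef] using hp)]
      simp [mul_comm]
    rw [← h2, h1, h3]
  have hAc : {p : P | p ∉ Pd}.ncard = A.card := by
    rw [Set.ncard_eq_toFinset_card']
    congr 1
    ext p; simp [hAdef]
  have hBc : {ℓ : L | ℓ ∉ Ld}.ncard = B.card := by
    rw [Set.ncard_eq_toFinset_card']
    congr 1
    ext ℓ; simp [hBdef]
  have hPcompl : Pd.ncard + {p : P | p ∉ Pd}.ncard = Nat.card P := by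
    have := Set.ncard_add_ncard_compl Pd
    simpa [Set.compl_def] using this
  have hLcompl : Ld.ncard + {ℓ : L | ℓ ∉ Ld}.ncard = Nat.card L := by
    have := Set.ncard_add_ncard_compl Ld
    simpa [Set.compl_def] using this
  constructor
  · rw [← hP, ← hL]
    have e1 : Nat.card P - u = A.card := by omega
    have e2 : Nat.card L - v = B.card := by omega
    rw [e1, e2, key]
  · rw [hAc, hBc, key]
end
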